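/- arXiv:2210.05492 — 2 statements merged into one kernel-verified Lean document; each statement's English description precedes it below -/
import Mathlib

section
/- For every t ≥ 1 and every x ∈ Δ(A), the piKL iterates satisfy ⟨ −u^t + λ∇φ(x^t) − λ∇φ(τ), x − x^{t+1} ⟩ = (λ t + 1/η) ( D_KL(x‖x^{t+1}) − D_KL(x‖x^t) + D_KL(x^{t+1}‖x^t) ). -/
/-!
After multiplying by `λ t + 1/η`, the logit of `x^{t+1}` is the cumulative utility
`∑_{s ≤ t} u^s` plus `t λ log τ`, up to an additive constant; this also holds for `t = 0`
because `x^1` is uniform. Subtracting the instances for `t - 1` and `t` writes the gradient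
`−u^t + λ∇φ(x^t) − λ∇φ(τ)` as `(λ t + 1/η) (log x^t − log x^{t+1})` plus a constant, the
constant is killed by pairing with the difference `x − x^{t+1}` of two probability vectors,
and the remaining pairing is the three-point identity for the KL divergence.
-/

open Finset Real

noncomputable section

def simplex (A : Type*) [Fintype A] : Set (A → ℝ) :=
  {x | (∀ a, 0 ≤ x a) ∧ ∑ a, x a = 1}

/-- KL divergence (with the convention `0 log 0 = 0`, automatic here). -/
def KL {A : Type*} [Fintype A] (x y : A → ℝ) : ℝ :=
  ∑ a, x a * Real.log (x a / y a)

def gradPhi {A : Type*} (y : A → ℝ) : A → ℝ := fun a => 1 + Real.log (y a)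

def ip {A : Type*} [Fintype A] (u x : A → ℝ) : ℝ := ∑ a, u a * x a

def softmax {A : Type*} [Fintype A] (θ : A → ℝ) : A → ℝ :=
  fun a => exp (θ a) / ∑ b, exp (θ b)

section Softmax

variable {A : Type*} [Fintype A]

lemma softmax_const (c : ℝ) : softmax (fun _ : A => c) = fun _ => (Fintype.card A : ℝ)⁻¹ := by
  funext a
  simp [softmax, div_eq_mul_inv, exp_ne_zero]

variable [Nonempty A]

lemma sum_exp_pos (θ : A → ℝ) : 0 < ∑ b, exp (θ b) :=
  sum_pos (fun b _ => exp_pos (θ b)) univ_nonempty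

lemma softmax_pos (θ : A → ℝ) (a : A) : 0 < softmax θ a :=
  div_pos (exp_pos _) (sum_exp_pos θ)

lemma sum_softmax (θ : A → ℝ) : ∑ a, softmax θ a = 1 := by
  simp only [softmax, ← sum_div, div_self (sum_exp_pos θ).ne']

lemma log_softmax (θ : A → ℝ) (a : A) :
    log (softmax θ a) = θ a - log (∑ b, exp (θ b)) := by
  rw [softmax, log_div (exp_pos _).ne' (sum_exp_pos θ).ne', log_exp]

end Softmax

section InnerProduct

variable {A : Type*} [Fintype A]

lemma ip_smul_left (c : ℝ) (g v : A → ℝ) : ip (c • g) v = c * ip g v := by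
  simp only [ip, Pi.smul_apply, smul_eq_mul, mul_sum, mul_assoc]

lemma ip_add_const_sub_of_sum_eq (g : A → ℝ) (C : ℝ) {x y : A → ℝ}
    (h : ∑ a, x a = ∑ a, y a) :
    ip (g + fun _ => C) (x - y) = ip g (x - y) := by
  have hzero : ∑ a, (x a - y a) = 0 := by rw [sum_sub_distrib, h, sub_self]
  simp only [ip, Pi.add_apply, Pi.sub_apply, add_mul, sum_add_distrib, ← mul_sum, hzero,
    mul_zero, add_zero]

end InnerProduct

lemma mul_log_div_of_ne_zero (p : ℝ) {q : ℝ} (hq : q ≠ 0) :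
    p * log (p / q) = p * log p - p * log q := by
  rcases eq_or_ne p 0 with rfl | hp
  · simp
  · rw [log_div hp hq, mul_sub]

lemma KL_sub_KL_add_KL {A : Type*} [Fintype A] (x : A → ℝ) {y y' : A → ℝ}
    (hy : ∀ a, y a ≠ 0) (hy' : ∀ a, y' a ≠ 0) :
    KL x y' - KL x y + KL y' y = ip (log ∘ y - log ∘ y') (x - y') := by
  simp only [KL, ip, ← sum_sub_distrib, ← sum_add_distrib]
  refine sum_congr rfl fun a _ => ?_
  simp only [mul_log_div_of_ne_zero _ (hy a), mul_log_div_of_ne_zero _ (hy' a),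
    Pi.sub_apply, Function.comp_apply]
  ring

def piKLLogit {A : Type*} [Fintype A] (τ : A → ℝ) (lam η : ℝ) (u : ℕ → A → ℝ) (t : ℕ) :
    A → ℝ :=
  fun a => ((t : ℝ)⁻¹ * ∑ s ∈ Icc 1 t, u s a + lam * log (τ a)) / (lam + 1 / (η * t))

section Iterates

variable {A : Type*} [Fintype A] (τ : A → ℝ) {lam η : ℝ} (u : ℕ → A → ℝ) {x : ℕ → A → ℝ}

lemma mul_piKLLogit (hlam : 0 < lam) (hη : 0 < η) {t : ℕ} (ht : 0 < t) (a : A) :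
    (lam * t + 1 / η) * piKLLogit τ lam η u t a = ∑ s ∈ Icc 1 t, u s a + t * lam * log (τ a) := by
  have htpos : (0 : ℝ) < t := Nat.cast_pos.mpr ht
  simp only [piKLLogit]
  field_simp

lemma exists_iterate_succ_eq_softmax (hx1 : ∀ a, x 1 a = (Fintype.card A : ℝ)⁻¹)
    (hxsucc : ∀ t, 1 ≤ t → x (t + 1) = softmax (piKLLogit τ lam η u t)) (t : ℕ) :
    ∃ θ, x (t + 1) = softmax θ := by
  rcases Nat.eq_zero_or_pos t with rfl | ht
  · exact ⟨fun _ => 0, by rw [softmax_const]; exact funext hx1⟩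
  · exact ⟨_, hxsucc t ht⟩

lemma exists_log_iterate_succ_eq [Nonempty A] (hlam : 0 < lam) (hη : 0 < η)
    (hx1 : ∀ a, x 1 a = (Fintype.card A : ℝ)⁻¹)
    (hxsucc : ∀ t, 1 ≤ t → x (t + 1) = softmax (piKLLogit τ lam η u t)) (t : ℕ) :
    ∃ C, ∀ a, (lam * t + 1 / η) * log (x (t + 1) a)
      = ∑ s ∈ Icc 1 t, u s a + t * lam * log (τ a) + C := by
  rcases Nat.eq_zero_or_pos t with rfl | ht
  · exact ⟨η⁻¹ * log (Fintype.card A : ℝ)⁻¹, fun a => by simp [hx1]⟩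
  refine ⟨-(lam * t + 1 / η) * log (∑ b, exp (piKLLogit τ lam η u t b)), fun a => ?_⟩
  rw [hxsucc t ht, log_softmax, mul_sub, mul_piKLLogit τ u hlam hη ht]
  ring

end Iterates

theorem pikl_prox_step_identity_general
    {A : Type*} [Fintype A] [Nonempty A]
    (τ : A → ℝ)
    (lam η : ℝ) (hlam : 0 < lam) (hη : 0 < η)
    (u : ℕ → A → ℝ)
    (x : ℕ → A → ℝ)
    (hx1 : ∀ a, x 1 a = (Fintype.card A : ℝ)⁻¹)
    (hxsucc : ∀ t, 1 ≤ t → ∀ a : A,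
      x (t + 1) a =
        Real.exp ((((t : ℝ)⁻¹ * ∑ s ∈ Finset.Icc 1 t, u s a) + lam * Real.log (τ a))
            / (lam + 1 / (η * t)))
        / ∑ b, Real.exp ((((t : ℝ)⁻¹ * ∑ s ∈ Finset.Icc 1 t, u s b) + lam * Real.log (τ b))
            / (lam + 1 / (η * t)))) :
    ∀ t : ℕ, 1 ≤ t → ∀ xx ∈ simplex A,
      ip (-(u t) + lam • gradPhi (x t) - lam • gradPhi τ) (xx - x (t + 1))
        = (lam * (t : ℝ) + 1 / η)
          * (KL xx (x (t + 1)) - KL xx (x t) + KL (x (t + 1)) (x t)) := by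
  intro t ht xx ⟨_, hxx⟩
  obtain ⟨r, rfl⟩ : ∃ r, t = r + 1 := ⟨t - 1, by omega⟩
  have hx : ∀ t, 1 ≤ t → x (t + 1) = softmax (piKLLogit τ lam η u t) :=
    fun t ht => funext (hxsucc t ht)
  have hsoftmax := exists_iterate_succ_eq_softmax τ u hx1 hx
  have hpos : ∀ s a, x (s + 1) a ≠ 0 := fun s a => by
    obtain ⟨θ, hθ⟩ := hsoftmax s
    exact hθ ▸ (softmax_pos θ a).ne'
  have hsum : ∑ a, xx a = ∑ a, x (r + 1 + 1) a := by
    obtain ⟨θ, hθ⟩ := hsoftmax (r + 1)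
    rw [hxx, hθ, sum_softmax]
  obtain ⟨C₀, h₀⟩ := exists_log_iterate_succ_eq τ u hlam hη hx1 hx r
  obtain ⟨C₁, h₁⟩ := exists_log_iterate_succ_eq τ u hlam hη hx1 hx (r + 1)
  have hgrad : -(u (r + 1)) + lam • gradPhi (x (r + 1)) - lam • gradPhi τ
      = (lam * ((r + 1 : ℕ) : ℝ) + 1 / η) • (log ∘ x (r + 1) - log ∘ x (r + 1 + 1))
        + fun _ => C₁ - C₀ := by
    funext a
    have hcum := sum_Icc_succ_top (Nat.le_add_left 1 r) fun s => u s a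
    simp only [gradPhi, Pi.add_apply, Pi.sub_apply, Pi.neg_apply, Pi.smul_apply, smul_eq_mul,
      Function.comp_apply] at hcum ⊢
    push_cast at h₀ h₁ ⊢
    linear_combination h₁ a - h₀ a + hcum
  rw [hgrad, ip_add_const_sub_of_sum_eq _ _ hsum, ip_smul_left,
    KL_sub_KL_add_KL xx (hpos r) (hpos (r + 1))]

/-- for every `t ≥ 1` and every `x ∈ Δ(A)`, the piKL iterates satisfy
`⟨ −u^t + λ∇φ(x^t) − λ∇φ(τ), x − x^{t+1} ⟩
   = (λ t + 1/η) ( D_KL(x‖x^{t+1}) − D_KL(x‖x^t) + D_KL(x^{t+1}‖x^t) )`. -/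
theorem pikl_prox_step_identity
    {A : Type*} [Fintype A] [Nonempty A]
    (τ : A → ℝ) (hτ : τ ∈ simplex A) (hτpos : ∀ a, 0 < τ a)
    (lam η : ℝ) (hlam : 0 < lam) (hη : 0 < η)
    (u : ℕ → A → ℝ)
    (x : ℕ → A → ℝ)
    (hx1 : ∀ a, x 1 a = (Fintype.card A : ℝ)⁻¹)
    (hxsucc : ∀ t, 1 ≤ t → ∀ a : A,
      x (t + 1) a =
        Real.exp ((((t : ℝ)⁻¹ * ∑ s ∈ Finset.Icc 1 t, u s a) + lam * Real.log (τ a))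
            / (lam + 1 / (η * t)))
        / ∑ b, Real.exp ((((t : ℝ)⁻¹ * ∑ s ∈ Finset.Icc 1 t, u s b) + lam * Real.log (τ b))
            / (lam + 1 / (η * t)))) :
    ∀ t : ℕ, 1 ≤ t → ∀ xx ∈ simplex A,
      ip (-(u t) + lam • gradPhi (x t) - lam • gradPhi τ) (xx - x (t + 1))
        = (lam * (t : ℝ) + 1 / η)
          * (KL xx (x (t + 1)) - KL xx (x t) + KL (x (t + 1)) (x t)) :=
  pikl_prox_step_identity_general τ lam η hlam hη u x hx1 hxsucc
end
end

section
/- Let (x*_{i,λ}) be the Bayes–Nash equilibrium of the regularized game. Let x'_{i,λ} ∈ Δ(A_i) be arbitrary policies with strictly positive entries, for i ∈ {1,2} and λ ∈ Λ_i, and set x̄'_1 := E_{λ∼β_1}[x'_{1,λ}], x̄'_2 := E_{λ∼β_2}[x'_{2,λ}]. Define α := E_{λ∼β_1}[ ⟨ −M x̄'_2 + λ∇φ(x'_{1,λ}) − λ∇φ(τ_1), x*_{1,λ} − x'_{1,λ} ⟩ ] and β := E_{λ∼β_2}[ ⟨ Mᵀ x̄'_1 + λ∇φ(x'_{2,λ})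 − λ∇φ(τ_2), x*_{2,λ} − x'_{2,λ} ⟩ ]. Then α + β ≤ −∑_{i∈{1,2}} E_{λ∼β_i}[ λ ( D_KL(x'_{i,λ}‖x*_{i,λ}) + D_KL(x*_{i,λ}‖x'_{i,λ}) ) ]. -/
/-!
Maximizing `⟨u, x⟩ - λ KL(x ‖ τ)` over the simplex is the same as minimizing `KL(x ‖ p)` for the
Gibbs policy `p ∝ τ exp (u / λ)`, so every equilibrium policy is this softmax and
`λ (∇φ(x*) - ∇φ(τ)) = u - c` for a constant `c`, which pairs to zero with `x* - x'`.
Substituting this into `α` and `β` leaves `-λ (KL(x' ‖ x*) + KL(x* ‖ x'))` for each type, plus the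
cross terms `⟨M (ȳ* - ȳ'), z̄* - z̄'⟩ - ⟨Mᵀ (z̄* - z̄'), ȳ* - ȳ'⟩` between the averaged policies,
which cancel because the game is zero-sum; so in fact equality holds.
-/

open Finset Real

noncomputable section

open InformationTheory Matrix

section Gibbs

variable {A : Type*} [Fintype A]

lemma nonempty_of_mem_simplex {x : A → ℝ} (hx : x ∈ simplex A) : Nonempty A := by
  by_contra h
  rw [not_nonempty_iff] at h
  simpa using hx.2

def partitionFn (τ u : A → ℝ) (lam : ℝ) : ℝ := ∑ a, τ a * exp (u a / lam)

def gibbs (τ u : A → ℝ) (lam : ℝ) (a : A) : ℝ := τ a * exp (u a / lam) / partitionFn τ u lam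

variable {τ u : A → ℝ} {lam : ℝ}

lemma partitionFn_pos [Nonempty A] (hτ : ∀ a, 0 < τ a) : 0 < partitionFn τ u lam :=
  sum_pos (fun a _ => mul_pos (hτ a) (exp_pos _)) univ_nonempty

lemma gibbs_pos [Nonempty A] (hτ : ∀ a, 0 < τ a) (a : A) : 0 < gibbs τ u lam a :=
  div_pos (mul_pos (hτ a) (exp_pos _)) (partitionFn_pos hτ)

lemma gibbs_mem_simplex [Nonempty A] (hτ : ∀ a, 0 < τ a) : gibbs τ u lam ∈ simplex A := by
  refine ⟨fun a => (gibbs_pos hτ a).le, ?_⟩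
  simp only [gibbs, ← sum_div]
  exact div_self (partitionFn_pos hτ).ne'

lemma log_gibbs [Nonempty A] (hτ : ∀ a, 0 < τ a) (a : A) :
    log (gibbs τ u lam a) = log (τ a) + u a / lam - log (partitionFn τ u lam) := by
  rw [gibbs, log_div (mul_pos (hτ a) (exp_pos _)).ne' (partitionFn_pos hτ).ne',
    log_mul (hτ a).ne' (exp_pos _).ne', log_exp]

lemma mul_log_gibbs_sub_log [Nonempty A] (hτ : ∀ a, 0 < τ a) (hlam : lam ≠ 0) (a : A) :
    lam * (log (gibbs τ u lam a) - log (τ a)) = u a - lam * log (partitionFn τ u lam) := by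
  rw [log_gibbs hτ]
  field_simp
  ring

lemma KL_self {p : A → ℝ} (hp : ∀ a, 0 < p a) : KL p p = 0 :=
  sum_eq_zero fun a _ => by rw [div_self (hp a).ne', log_one, mul_zero]

lemma KL_eq_sum_klFun {x p : A → ℝ} (hp : ∀ a, 0 < p a) :
    KL x p = ∑ a, p a * klFun (x a / p a) + (∑ a, x a - ∑ a, p a) := by
  rw [← sum_sub_distrib, ← sum_add_distrib]
  refine sum_congr rfl fun a _ => ?_
  have := (hp a).ne'
  rw [klFun_apply]
  field_simp
  ring

lemma eq_of_KL_nonpos {x p : A → ℝ} (hx : x ∈ simplex A) (hp : p ∈ simplex A)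
    (hp_pos : ∀ a, 0 < p a) (h : KL x p ≤ 0) : x = p := by
  rw [KL_eq_sum_klFun hp_pos, hx.2, hp.2, sub_self, add_zero] at h
  have hterm_nonneg : ∀ a ∈ univ, 0 ≤ p a * klFun (x a / p a) := fun a _ =>
    mul_nonneg (hp_pos a).le (klFun_nonneg (div_nonneg (hx.1 a) (hp_pos a).le))
  have hterm_zero := (sum_eq_zero_iff_of_nonneg hterm_nonneg).1
    (le_antisymm h (sum_nonneg hterm_nonneg))
  funext a
  have hklFun := (mul_eq_zero.1 (hterm_zero a (mem_univ a))).resolve_left (hp_pos a).ne'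
  rw [klFun_eq_zero_iff (div_nonneg (hx.1 a) (hp_pos a).le)] at hklFun
  exact (div_eq_one_iff_eq (hp_pos a).ne').1 hklFun

/-- Gibbs variational principle. -/
lemma ip_sub_mul_KL_eq [Nonempty A] (hτ : ∀ a, 0 < τ a) (hlam : lam ≠ 0) {x : A → ℝ}
    (hx : ∑ a, x a = 1) :
    ip u x - lam * KL x τ = lam * log (partitionFn τ u lam) - lam * KL x (gibbs τ u lam) := by
  have hterm : ∀ a, lam * (x a * log (x a / gibbs τ u lam a))
      = lam * (x a * log (x a / τ a)) - u a * x a + lam * log (partitionFn τ u lam) * x a := by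
    intro a
    rcases eq_or_ne (x a) 0 with h | h
    · simp [h]
    · rw [log_div h (gibbs_pos hτ a).ne', log_div h (hτ a).ne', log_gibbs hτ]
      field_simp
      ring
  have hsum : lam * KL x (gibbs τ u lam)
      = lam * KL x τ - ip u x + lam * log (partitionFn τ u lam) * ∑ a, x a := by
    simp only [KL, ip, mul_sum, ← sum_sub_distrib, ← sum_add_distrib, hterm]
  rw [hsum, hx]
  ring

lemma eq_gibbs_of_isMaxOn (hτ : ∀ a, 0 < τ a) (hlam : 0 < lam) {xs : A → ℝ}
    (hxs : xs ∈ simplex A) (hmax : IsMaxOn (fun x => ip u x - lam * KL x τ) (simplex A) xs) :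
    xs = gibbs τ u lam := by
  have := nonempty_of_mem_simplex hxs
  have hg := gibbs_mem_simplex (u := u) (lam := lam) hτ
  have hle : ip u (gibbs τ u lam) - lam * KL (gibbs τ u lam) τ ≤ ip u xs - lam * KL xs τ :=
    hmax hg
  rw [ip_sub_mul_KL_eq hτ hlam.ne' hg.2, ip_sub_mul_KL_eq hτ hlam.ne' hxs.2,
    KL_self (gibbs_pos hτ)] at hle
  refine eq_of_KL_nonpos hxs hg (gibbs_pos hτ) ?_
  nlinarith

end Gibbs

section StrongConvexity

variable {A : Type*} [Fintype A]

lemma KL_add_KL_swap {x y : A → ℝ} (hx : ∀ a, 0 < x a) (hy : ∀ a, 0 < y a) :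
    KL x y + KL y x = ∑ a, (x a - y a) * (log (x a) - log (y a)) := by
  rw [KL, KL, ← sum_add_distrib]
  refine sum_congr rfl fun a _ => ?_
  rw [log_div (hx a).ne' (hy a).ne', log_div (hy a).ne' (hx a).ne']
  ring

lemma ip_add_smul_gradPhi_sub_eq {w u τ xs x' : A → ℝ} {l c : ℝ}
    (hxs : ∀ a, 0 < xs a) (hx' : ∀ a, 0 < x' a) (hsum : ∑ a, xs a = ∑ a, x' a)
    (hc : ∀ a, l * (log (xs a) - log (τ a)) = u a - c) :
    ip (w + l • gradPhi x' - l • gradPhi τ) (xs - x')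
      = ip (w + u) (xs - x') - l * (KL x' xs + KL xs x') := by
  have hsum' : ∑ a, (xs a - x' a) = 0 := by rw [sum_sub_distrib, hsum, sub_self]
  rw [KL_add_KL_swap hx' hxs]
  calc ip (w + l • gradPhi x' - l • gradPhi τ) (xs - x')
      = ∑ a, ((w a + u a) * (xs a - x' a) - l * ((x' a - xs a) * (log (x' a) - log (xs a)))
          - c * (xs a - x' a)) := by
        refine sum_congr rfl fun a _ => ?_
        simp only [gradPhi, Pi.add_apply, Pi.sub_apply, Pi.smul_apply, smul_eq_mul]
        linear_combination (xs a - x' a) * hc a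
    _ = ip (w + u) (xs - x') - l * ∑ a, (x' a - xs a) * (log (x' a) - log (xs a)) := by
        rw [sum_sub_distrib, sum_sub_distrib, ← mul_sum, ← mul_sum, hsum', mul_zero, sub_zero]
        rfl

lemma sum_mul_ip_sub (Λ : Finset ℝ) (β : ℝ → ℝ) (v : A → ℝ) (f g : ℝ → A → ℝ) :
    ∑ l ∈ Λ, β l * ip v (f l - g l)
      = ip v ((fun a => ∑ l ∈ Λ, β l * f l a) - fun a => ∑ l ∈ Λ, β l * g l a) := by
  simp only [ip, Pi.sub_apply, mul_sum, ← sum_sub_distrib]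
  rw [sum_comm]
  refine sum_congr rfl fun a _ => sum_congr rfl fun l _ => ?_
  ring

lemma sum_mul_ip_eq_of_isMaxOn {Λ : Finset ℝ} (hΛ : ∀ l ∈ Λ, 0 < l) (β : ℝ → ℝ)
    {τ u w : A → ℝ} (hτ : ∀ a, 0 < τ a) {xs x' : ℝ → A → ℝ}
    (hxs : ∀ l ∈ Λ,
      xs l ∈ simplex A ∧ IsMaxOn (fun x => ip u x - l * KL x τ) (simplex A) (xs l))
    (hx' : ∀ l ∈ Λ, x' l ∈ simplex A ∧ ∀ a, 0 < x' l a) :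
    ∑ l ∈ Λ, β l * ip (w + l • gradPhi (x' l) - l • gradPhi τ) (xs l - x' l)
      = ip (w + u) ((fun a => ∑ l ∈ Λ, β l * xs l a) - fun a => ∑ l ∈ Λ, β l * x' l a)
        - ∑ l ∈ Λ, β l * (l * (KL (x' l) (xs l) + KL (xs l) (x' l))) := by
  have hterm : ∀ l ∈ Λ, ip (w + l • gradPhi (x' l) - l • gradPhi τ) (xs l - x' l)
      = ip (w + u) (xs l - x' l) - l * (KL (x' l) (xs l) + KL (xs l) (x' l)) := by
    intro l hl
    obtain ⟨hxs_mem, hmax⟩ := hxs l hl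
    have := nonempty_of_mem_simplex hxs_mem
    have hgibbs := eq_gibbs_of_isMaxOn hτ (hΛ l hl) hxs_mem hmax
    refine ip_add_smul_gradPhi_sub_eq (c := l * log (partitionFn τ u l))
      (fun a => hgibbs ▸ gibbs_pos hτ a) (hx' l hl).2 (by rw [hxs_mem.2, (hx' l hl).1.2])
      fun a => ?_
    rw [hgibbs]
    exact mul_log_gibbs_sub_log hτ (hΛ l hl).ne' a
  rw [← sum_mul_ip_sub, ← sum_sub_distrib]
  refine sum_congr rfl fun l hl => ?_
  rw [hterm l hl]
  ring

end StrongConvexity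

lemma ip_cross_terms_eq_zero {A₁ A₂ : Type*} [Fintype A₁] [Fintype A₂] (M : Matrix A₁ A₂ ℝ)
    (y y' : A₂ → ℝ) (z z' : A₁ → ℝ) :
    ip (-(M *ᵥ y') + M *ᵥ y) (z - z') + ip (Mᵀ *ᵥ z' + -(Mᵀ *ᵥ z)) (y - y') = 0 := by
  have hadj : ip (M *ᵥ (y - y')) (z - z') = ip (Mᵀ *ᵥ (z - z')) (y - y') := by
    change (M *ᵥ (y - y')) ⬝ᵥ (z - z') = (Mᵀ *ᵥ (z - z')) ⬝ᵥ (y - y')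
    rw [dotProduct_comm, dotProduct_mulVec, mulVec_transpose]
  have htranspose : Mᵀ *ᵥ z' + -(Mᵀ *ᵥ z) = -(Mᵀ *ᵥ (z - z')) := by
    rw [mulVec_sub]
    abel
  rw [neg_add_eq_sub, ← mulVec_sub, htranspose, hadj]
  simp only [ip, Pi.neg_apply, neg_mul, sum_neg_distrib, add_neg_cancel]

theorem regularized_equilibrium_strong_convexity_general
    {A₁ A₂ : Type*} [Fintype A₁] [Fintype A₂]
    (M : Matrix A₁ A₂ ℝ)
    (Λ₁ Λ₂ : Finset ℝ)
    (hΛ₁pos : ∀ l ∈ Λ₁, (0 : ℝ) < l) (hΛ₂pos : ∀ l ∈ Λ₂, (0 : ℝ) < l)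
    (β₁ β₂ : ℝ → ℝ)
    (τ₁ : A₁ → ℝ) (hτ₁pos : ∀ a, 0 < τ₁ a)
    (τ₂ : A₂ → ℝ) (hτ₂pos : ∀ a, 0 < τ₂ a)
    -- the Bayes–Nash equilibrium of the regularized game
    (xs₁ : ℝ → A₁ → ℝ) (xs₂ : ℝ → A₂ → ℝ)
    (hxs₁ : ∀ l ∈ Λ₁,
      xs₁ l ∈ simplex A₁ ∧
      IsMaxOn
        (fun x => ip (M.mulVec (fun b => ∑ l' ∈ Λ₂, β₂ l' * xs₂ l' b)) x - l * KL x τ₁)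
        (simplex A₁) (xs₁ l))
    (hxs₂ : ∀ l ∈ Λ₂,
      xs₂ l ∈ simplex A₂ ∧
      IsMaxOn
        (fun x => ip (-(M.transpose.mulVec (fun a => ∑ l' ∈ Λ₁, β₁ l' * xs₁ l' a))) x
          - l * KL x τ₂)
        (simplex A₂) (xs₂ l))
    -- arbitrary strictly positive policies
    (x'₁ : ℝ → A₁ → ℝ) (x'₂ : ℝ → A₂ → ℝ)
    (hx'₁ : ∀ l ∈ Λ₁, x'₁ l ∈ simplex A₁ ∧ ∀ a, 0 < x'₁ l a)
    (hx'₂ : ∀ l ∈ Λ₂, x'₂ l ∈ simplex A₂ ∧ ∀ a, 0 < x'₂ l a)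
    (alpha beta : ℝ)
    (halpha : alpha =
      ∑ l ∈ Λ₁, β₁ l *
        ip (-(M.mulVec (fun b => ∑ l' ∈ Λ₂, β₂ l' * x'₂ l' b))
              + l • gradPhi (x'₁ l) - l • gradPhi τ₁)
           (xs₁ l - x'₁ l))
    (hbeta : beta =
      ∑ l ∈ Λ₂, β₂ l *
        ip (M.transpose.mulVec (fun a => ∑ l' ∈ Λ₁, β₁ l' * x'₁ l' a)
              + l • gradPhi (x'₂ l) - l • gradPhi τ₂)
           (xs₂ l - x'₂ l)) :
    alpha + beta
      ≤ -(∑ l ∈ Λ₁, β₁ l * (l * (KL (x'₁ l) (xs₁ l) + KL (xs₁ l) (x'₁ l)))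
          + ∑ l ∈ Λ₂, β₂ l * (l * (KL (x'₂ l) (xs₂ l) + KL (xs₂ l) (x'₂ l)))) := by
  rw [halpha, hbeta, sum_mul_ip_eq_of_isMaxOn hΛ₁pos β₁ hτ₁pos hxs₁ hx'₁,
    sum_mul_ip_eq_of_isMaxOn hΛ₂pos β₂ hτ₂pos hxs₂ hx'₂]
  linarith [ip_cross_terms_eq_zero M (fun b => ∑ l ∈ Λ₂, β₂ l * xs₂ l b)
    (fun b => ∑ l ∈ Λ₂, β₂ l * x'₂ l b) (fun a => ∑ l ∈ Λ₁, β₁ l * xs₁ l a)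
    (fun a => ∑ l ∈ Λ₁, β₁ l * x'₁ l a)]

/-- strong-convexity inequality at the Bayes–Nash equilibrium of the
regularized game: with `α` and `β` as defined below,
`α + β ≤ −∑_{i∈{1,2}} E_{λ∼β_i}[λ(D_KL(x'_{i,λ}‖x*_{i,λ}) + D_KL(x*_{i,λ}‖x'_{i,λ}))]`. -/
theorem regularized_equilibrium_strong_convexity
    {A₁ A₂ : Type*} [Fintype A₁] [Fintype A₂] [Nonempty A₁] [Nonempty A₂]
    (M : Matrix A₁ A₂ ℝ)
    (Λ₁ Λ₂ : Finset ℝ) (hΛ₁ : Λ₁.Nonempty) (hΛ₂ : Λ₂.Nonempty)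
    (hΛ₁pos : ∀ l ∈ Λ₁, (0 : ℝ) < l) (hΛ₂pos : ∀ l ∈ Λ₂, (0 : ℝ) < l)
    (β₁ β₂ : ℝ → ℝ)
    (hβ₁ : ∀ l ∈ Λ₁, 0 ≤ β₁ l) (hβ₁sum : ∑ l ∈ Λ₁, β₁ l = 1)
    (hβ₂ : ∀ l ∈ Λ₂, 0 ≤ β₂ l) (hβ₂sum : ∑ l ∈ Λ₂, β₂ l = 1)
    (τ₁ : A₁ → ℝ) (hτ₁ : τ₁ ∈ simplex A₁) (hτ₁pos : ∀ a, 0 < τ₁ a)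
    (τ₂ : A₂ → ℝ) (hτ₂ : τ₂ ∈ simplex A₂) (hτ₂pos : ∀ a, 0 < τ₂ a)
    -- the Bayes–Nash equilibrium of the regularized game
    (xs₁ : ℝ → A₁ → ℝ) (xs₂ : ℝ → A₂ → ℝ)
    (hxs₁ : ∀ l ∈ Λ₁,
      xs₁ l ∈ simplex A₁ ∧
      IsMaxOn
        (fun x => ip (M.mulVec (fun b => ∑ l' ∈ Λ₂, β₂ l' * xs₂ l' b)) x - l * KL x τ₁)
        (simplex A₁) (xs₁ l))
    (hxs₂ : ∀ l ∈ Λ₂,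
      xs₂ l ∈ simplex A₂ ∧
      IsMaxOn
        (fun x => ip (-(M.transpose.mulVec (fun a => ∑ l' ∈ Λ₁, β₁ l' * xs₁ l' a))) x
          - l * KL x τ₂)
        (simplex A₂) (xs₂ l))
    -- arbitrary strictly positive policies
    (x'₁ : ℝ → A₁ → ℝ) (x'₂ : ℝ → A₂ → ℝ)
    (hx'₁ : ∀ l ∈ Λ₁, x'₁ l ∈ simplex A₁ ∧ ∀ a, 0 < x'₁ l a)
    (hx'₂ : ∀ l ∈ Λ₂, x'₂ l ∈ simplex A₂ ∧ ∀ a, 0 < x'₂ l a)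
    (alpha beta : ℝ)
    (halpha : alpha =
      ∑ l ∈ Λ₁, β₁ l *
        ip (-(M.mulVec (fun b => ∑ l' ∈ Λ₂, β₂ l' * x'₂ l' b))
              + l • gradPhi (x'₁ l) - l • gradPhi τ₁)
           (xs₁ l - x'₁ l))
    (hbeta : beta =
      ∑ l ∈ Λ₂, β₂ l *
        ip (M.transpose.mulVec (fun a => ∑ l' ∈ Λ₁, β₁ l' * x'₁ l' a)
              + l • gradPhi (x'₂ l) - l • gradPhi τ₂)
           (xs₂ l - x'₂ l)) :
    alpha + beta
      ≤ -(∑ l ∈ Λ₁, β₁ l * (l * (KL (x'₁ l) (xs₁ l) + KL (xs₁ l) (x'₁ l)))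
          + ∑ l ∈ Λ₂, β₂ l * (l * (KL (x'₂ l) (xs₂ l) + KL (xs₂ l) (x'₂ l)))) :=
  regularized_equilibrium_strong_convexity_general M Λ₁ Λ₂ hΛ₁pos hΛ₂pos β₁ β₂ τ₁ hτ₁pos τ₂ hτ₂pos
    xs₁ xs₂ hxs₁ hxs₂ x'₁ x'₂ hx'₁ hx'₂ alpha beta halpha hbeta
end
end
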